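/- Estimate for the quadratic form P (Lemma 5.2, eq. (5.10)): there is a universal constant C such that for all symmetric 2-tensors p, k on ℝ^{1+3} and any point with x ≠ 0, |P(p,k)| ≤ C ( |p|_{𝒯𝒰} |k|_{𝒯𝒰} + |p|_{LL} |k| + |p| |k|_{LL} ). -/
import Mathlib


open scoped BigOperators ENNReal
open MeasureTheory

noncomputable section

namespace LindbladRodnianski

/-- Minkowski metric `diag(-1,1,1,1)` (numerically the same with indices up or down). -/
def mink (α β : Fin 4) : ℝ := if α = β then (if α = 0 then -1 else 1) else 0

/-- spatial part of a spacetime point -/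
def sp (y : Fin 4 → ℝ) : Fin 3 → ℝ := fun i => y i.succ

/-- Euclidean norm on `Fin 3 → ℝ` -/
def nr3 (x : Fin 3 → ℝ) : ℝ := Real.sqrt (∑ i : Fin 3, x i ^ 2)

/-- r = |x| -/
def rad (y : Fin 4 → ℝ) : ℝ := nr3 (sp y)

/-- the unit spatial direction ω = x/|x| -/
def uom (y : Fin 4 → ℝ) : Fin 3 → ℝ := fun i => sp y i / rad y

/-- q = r - t -/
def qq (y : Fin 4 → ℝ) : ℝ := rad y - y 0

/-- combine a time and a space point into a spacetime point -/
def tins (t : ℝ) (x : Fin 3 → ℝ) : Fin 4 → ℝ := Fin.cons t x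

/-- L = (1, ω) (indices up) -/
def vecL (ω : Fin 3 → ℝ) : Fin 4 → ℝ := ![1, ω 0, ω 1, ω 2]
/-- L̄ = (1, -ω) (indices up) -/
def vecLb (ω : Fin 3 → ℝ) : Fin 4 → ℝ := ![1, -ω 0, -ω 1, -ω 2]
/-- L with index lowered by m -/
def vecLlow (ω : Fin 3 → ℝ) : Fin 4 → ℝ := ![-1, ω 0, ω 1, ω 2]
/-- L̄ with index lowered by m -/
def vecLblow (ω : Fin 3 → ℝ) : Fin 4 → ℝ := ![-1, -ω 0, -ω 1, -ω 2]
/-- a spatial vector viewed as a spacetime vector -/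
def spat (s : Fin 3 → ℝ) : Fin 4 → ℝ := ![0, s 0, s 1, s 2]

/-- `ω, s₁, s₂` is an (ordered) orthonormal frame of ℝ³;
equivalently `s₁, s₂` is an orthonormal basis of the plane orthogonal to the unit vector ω. -/
def IsFrame (ω s₁ s₂ : Fin 3 → ℝ) : Prop :=
  (∑ i : Fin 3, ω i * ω i) = 1 ∧ (∑ i : Fin 3, s₁ i * s₁ i) = 1 ∧
  (∑ i : Fin 3, s₂ i * s₂ i) = 1 ∧ (∑ i : Fin 3, s₁ i * s₂ i) = 0 ∧
  (∑ i : Fin 3, ω i * s₁ i) = 0 ∧ (∑ i : Fin 3, ω i * s₂ i) = 0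

/-- contraction of a 2-tensor with two vectors: `p_{αβ} U^α V^β` -/
def con2 (p : Fin 4 → Fin 4 → ℝ) (U V : Fin 4 → ℝ) : ℝ :=
  ∑ α : Fin 4, ∑ β : Fin 4, p α β * U α * V β

/-- Euclidean norm of a 2-tensor -/
def tnorm (p : Fin 4 → Fin 4 → ℝ) : ℝ :=
  Real.sqrt (∑ α : Fin 4, ∑ β : Fin 4, (p α β) ^ 2)

/-- coordinate derivative ∂_α f -/
def pd (f : (Fin 4 → ℝ) → ℝ) (α : Fin 4) (y : Fin 4 → ℝ) : ℝ :=
  fderiv ℝ f y (Pi.single α 1)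

/-- ∂_α ∂_β f -/
def pd2 (f : (Fin 4 → ℝ) → ℝ) (α β : Fin 4) (y : Fin 4 → ℝ) : ℝ :=
  pd (pd f β) α y

/-- |∂f| -/
def dnorm (f : (Fin 4 → ℝ) → ℝ) (y : Fin 4 → ℝ) : ℝ :=
  Real.sqrt (∑ α : Fin 4, (pd f α y) ^ 2)

/-- ω extended by ω₀ = 0 to a spacetime vector -/
def uom4 (y : Fin 4 → ℝ) : Fin 4 → ℝ := spat (uom y)

/-- radial derivative ∂_r f = ω^j ∂_j f -/
def pdr (f : (Fin 4 → ℝ) → ℝ) (y : Fin 4 → ℝ) : ℝ :=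
  ∑ α : Fin 4, uom4 y α * pd f α y

/-- ∂_q = ½(∂_r - ∂_t) -/
def pdq (f : (Fin 4 → ℝ) → ℝ) (y : Fin 4 → ℝ) : ℝ := (pdr f y - pd f 0 y) / 2

/-- ∂_s = ½(∂_t + ∂_r) -/
def pds (f : (Fin 4 → ℝ) → ℝ) (y : Fin 4 → ℝ) : ℝ := (pd f 0 y + pdr f y) / 2

/-- the tangential derivatives: index 0 is ∂_s, index i.succ is ∂̄_i = ∂_i - ω_i ω^j ∂_j -/
def tpd (f : (Fin 4 → ℝ) → ℝ) (a : Fin 4) (y : Fin 4 → ℝ) : ℝ :=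
  if a = 0 then pds f y else pd f a y - uom4 y a * pdr f y

/-- |∂̄f| -/
def tdnorm (f : (Fin 4 → ℝ) → ℝ) (y : Fin 4 → ℝ) : ℝ :=
  Real.sqrt (∑ a : Fin 4, (tpd f a y) ^ 2)

/-- coordinates with the index lowered: x₀ = -t, x_i = xⁱ -/
def lowerc (y : Fin 4 → ℝ) (α : Fin 4) : ℝ := if α = 0 then -(y 0) else y α

/-- the translation vector field ∂_μ (its coefficients) -/
def dVF (μ : Fin 4) : (Fin 4 → ℝ) → Fin 4 → ℝ := fun _ => Pi.single μ 1

/-- the rotation/boost field Ω_{ab} = x_a ∂_b - x_b ∂_a (its coefficients) -/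
def omVF (a b : Fin 4) : (Fin 4 → ℝ) → Fin 4 → ℝ :=
  fun y ν => lowerc y a * (if ν = b then (1:ℝ) else 0) - lowerc y b * (if ν = a then (1:ℝ) else 0)

/-- the scaling field S = t∂_t + x^i∂_i (its coefficients) -/
def sVF : (Fin 4 → ℝ) → Fin 4 → ℝ := fun y => y

/-- the family 𝒵 of Minkowski vector fields -/
def ZV : Fin 11 → (Fin 4 → ℝ) → Fin 4 → ℝ :=
  ![dVF 0, dVF 1, dVF 2, dVF 3,
    omVF 0 1, omVF 0 2, omVF 0 3, omVF 1 2, omVF 1 3, omVF 2 3, sVF]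

/-- apply a vector field (given by its coefficients) to a function -/
def Zap (Zc : (Fin 4 → ℝ) → Fin 4 → ℝ) (f : (Fin 4 → ℝ) → ℝ) (y : Fin 4 → ℝ) : ℝ :=
  ∑ μ : Fin 4, Zc y μ * pd f μ y

/-- the Minkowski wave operator □ = m^{αβ}∂_α∂_β = -∂_t² + Δ -/
def box (f : (Fin 4 → ℝ) → ℝ) (y : Fin 4 → ℝ) : ℝ :=
  ∑ α : Fin 4, ∑ β : Fin 4, mink α β * pd2 f α β y

/-- the reduced wave operator □̃_g = □ + H^{αβ}∂_α∂_β with g = m + H (indices up) -/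
def boxg (H : (Fin 4 → ℝ) → Fin 4 → Fin 4 → ℝ) (f : (Fin 4 → ℝ) → ℝ) (y : Fin 4 → ℝ) : ℝ :=
  box f y + ∑ α : Fin 4, ∑ β : Fin 4, H y α β * pd2 f α β y

/-- |k|_{L𝒯} for an index-up 2-tensor (contractions with lowered frame vectors) -/
def normLT (k : Fin 4 → Fin 4 → ℝ) (ω s₁ s₂ : Fin 3 → ℝ) : ℝ :=
  |con2 k (vecLlow ω) (vecLlow ω)| + |con2 k (vecLlow ω) (spat s₁)| +
    |con2 k (vecLlow ω) (spat s₂)|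

/-- the region D_t = {x : t/2 ≤ |x| ≤ 2t} -/
def Dreg (t : ℝ) : Set (Fin 3 → ℝ) := {x | t / 2 ≤ nr3 x ∧ nr3 x ≤ 2 * t}


/-- The quadratic form `P` of the reduced Einstein equations. -/
def Pform (p k : Fin 4 → Fin 4 → ℝ) : ℝ :=
  (1/4) * (∑ α : Fin 4, ∑ β : Fin 4, mink α β * p α β) *
      (∑ γ : Fin 4, ∑ δ : Fin 4, mink γ δ * k γ δ)
  - (1/2) * ∑ α : Fin 4, ∑ α' : Fin 4, ∑ β : Fin 4, ∑ β' : Fin 4,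
      mink α α' * mink β β' * p α β * k α' β'

/-- the family 𝒯 = {L, S₁, S₂} (indices up) -/
def Tfam (ω s₁ s₂ : Fin 3 → ℝ) : Fin 3 → Fin 4 → ℝ := ![vecL ω, spat s₁, spat s₂]

/-- the family 𝒰 = {L, L̄, S₁, S₂} (indices up) -/
def Ufam (ω s₁ s₂ : Fin 3 → ℝ) : Fin 4 → Fin 4 → ℝ := ![vecL ω, vecLb ω, spat s₁, spat s₂]

/-- |p|_{𝒯𝒰} for an index-down 2-tensor -/
def normTU (p : Fin 4 → Fin 4 → ℝ) (ω s₁ s₂ : Fin 3 → ℝ) : ℝ :=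
  ∑ i : Fin 3, ∑ j : Fin 4, |con2 p (Tfam ω s₁ s₂ i) (Ufam ω s₁ s₂ j)|

open Matrix in
lemma frame_complete {ω s₁ s₂ : Fin 3 → ℝ} (h : IsFrame ω s₁ s₂) (i j : Fin 3) :
    ω i * ω j + s₁ i * s₁ j + s₂ i * s₂ j = if i = j then 1 else 0 := by
  obtain ⟨h1, h2, h3, h4, h5, h6⟩ := h
  simp only [Fin.sum_univ_three] at h1 h2 h3 h4 h5 h6
  set A : Matrix (Fin 3) (Fin 3) ℝ := Matrix.of ![ω, s₁, s₂] with hA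
  have hAAT : A * Aᵀ = 1 := by
    ext a b
    fin_cases a <;> fin_cases b <;>
      simp only [hA, Matrix.mul_apply, Matrix.transpose_apply, Fin.sum_univ_three,
        Matrix.of_apply, Matrix.cons_val_zero, Matrix.cons_val_one, Matrix.head_cons,
        Matrix.cons_val_two, Matrix.tail_cons, Matrix.one_apply] <;> norm_num [Fin.ext_iff] <;>
      first
        | linear_combination h1 | linear_combination h2 | linear_combination h3
        | linear_combination h4 | linear_combination h5 | linear_combination h6
  have hATA : Aᵀ * A = 1 := mul_eq_one_comm.mp hAAT
  have he : (Aᵀ * A) i j = (1 : Matrix (Fin 3) (Fin 3) ℝ) i j := by rw [hATA]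
  simp only [Matrix.mul_apply, Matrix.transpose_apply, Matrix.one_apply,
    Fin.sum_univ_three] at he
  simpa [hA] using he

/-- the frame expression of the (inverse) Minkowski metric -/
def Tm (ω s₁ s₂ : Fin 3 → ℝ) (α β : Fin 4) : ℝ :=
  -(1/2) * (vecL ω α * vecLb ω β + vecLb ω α * vecL ω β)
    + spat s₁ α * spat s₁ β + spat s₂ α * spat s₂ β

lemma mink_eq_Tm {ω s₁ s₂ : Fin 3 → ℝ} (h : IsFrame ω s₁ s₂) :
    ∀ α β : Fin 4, mink α β = Tm ω s₁ s₂ α β := by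
  have e00 : ω 0 * ω 0 + s₁ 0 * s₁ 0 + s₂ 0 * s₂ 0 = 1 := by simpa using frame_complete h 0 0
  have e11 : ω 1 * ω 1 + s₁ 1 * s₁ 1 + s₂ 1 * s₂ 1 = 1 := by simpa using frame_complete h 1 1
  have e22 : ω 2 * ω 2 + s₁ 2 * s₁ 2 + s₂ 2 * s₂ 2 = 1 := by simpa using frame_complete h 2 2
  have e01 : ω 0 * ω 1 + s₁ 0 * s₁ 1 + s₂ 0 * s₂ 1 = 0 := by simpa using frame_complete h 0 1
  have e02 : ω 0 * ω 2 + s₁ 0 * s₁ 2 + s₂ 0 * s₂ 2 = 0 := by simpa using frame_complete h 0 2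
  have e12 : ω 1 * ω 2 + s₁ 1 * s₁ 2 + s₂ 1 * s₂ 2 = 0 := by simpa using frame_complete h 1 2
  have e10 : ω 1 * ω 0 + s₁ 1 * s₁ 0 + s₂ 1 * s₂ 0 = 0 := by simpa using frame_complete h 1 0
  have e20 : ω 2 * ω 0 + s₁ 2 * s₁ 0 + s₂ 2 * s₂ 0 = 0 := by simpa using frame_complete h 2 0
  have e21 : ω 2 * ω 1 + s₁ 2 * s₁ 1 + s₂ 2 * s₂ 1 = 0 := by simpa using frame_complete h 2 1
  intro α β
  fin_cases α <;> fin_cases β <;>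
    simp only [mink, Tm, vecL, vecLb, spat, Matrix.cons_val_zero, Matrix.cons_val_one,
      Matrix.head_cons, Matrix.cons_val_two, Matrix.tail_cons, Matrix.cons_val_three,
      Matrix.head_fin_const] <;>
    norm_num [Fin.ext_iff] <;>
    first
      | linear_combination e00
      | linear_combination -e00
      | linear_combination e11
      | linear_combination -e11
      | linear_combination e22
      | linear_combination -e22
      | linear_combination e01
      | linear_combination -e01
      | linear_combination e02
      | linear_combination -e02
      | linear_combination e12
      | linear_combination -e12
      | linear_combination e10
      | linear_combination -e10
      | linear_combination e20
      | linear_combination -e20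
      | linear_combination e21
      | linear_combination -e21


lemma Pform_decomp {ω s₁ s₂ : Fin 3 → ℝ} (h : IsFrame ω s₁ s₂) (p k : Fin 4 → Fin 4 → ℝ) :
    Pform p k =
      (1/4) * (-(1/2) * con2 p (vecL ω) (vecLb ω) - (1/2) * con2 p (vecLb ω) (vecL ω)
          + con2 p (spat s₁) (spat s₁) + con2 p (spat s₂) (spat s₂)) *
        (-(1/2) * con2 k (vecL ω) (vecLb ω) - (1/2) * con2 k (vecLb ω) (vecL ω)
          + con2 k (spat s₁) (spat s₁) + con2 k (spat s₂) (spat s₂))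
      - (1/2) * ( (1/4) * con2 p (vecL ω) (vecL ω) * con2 k (vecLb ω) (vecLb ω)
        + (1/4) * con2 p (vecL ω) (vecLb ω) * con2 k (vecLb ω) (vecL ω)
        - (1/2) * con2 p (vecL ω) (spat s₁) * con2 k (vecLb ω) (spat s₁)
        - (1/2) * con2 p (vecL ω) (spat s₂) * con2 k (vecLb ω) (spat s₂)
        + (1/4) * con2 p (vecLb ω) (vecLb ω) * con2 k (vecL ω) (vecL ω)
        + (1/4) * con2 p (vecLb ω) (vecL ω) * con2 k (vecL ω) (vecLb ω)
        - (1/2) * con2 p (vecLb ω) (spat s₁) * con2 k (vecL ω) (spat s₁)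
        - (1/2) * con2 p (vecLb ω) (spat s₂) * con2 k (vecL ω) (spat s₂)
        - (1/2) * con2 p (spat s₁) (vecL ω) * con2 k (spat s₁) (vecLb ω)
        - (1/2) * con2 p (spat s₁) (vecLb ω) * con2 k (spat s₁) (vecL ω)
        + con2 p (spat s₁) (spat s₁) * con2 k (spat s₁) (spat s₁)
        + con2 p (spat s₁) (spat s₂) * con2 k (spat s₁) (spat s₂)
        - (1/2) * con2 p (spat s₂) (vecL ω) * con2 k (spat s₂) (vecLb ω)
        - (1/2) * con2 p (spat s₂) (vecLb ω) * con2 k (spat s₂) (vecL ω)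
        + con2 p (spat s₂) (spat s₁) * con2 k (spat s₂) (spat s₁)
        + con2 p (spat s₂) (spat s₂) * con2 k (spat s₂) (spat s₂) ) := by
  have hm := mink_eq_Tm h
  simp only [Pform, con2, hm, Tm, vecL, vecLb, spat, Fin.sum_univ_four,
    Matrix.cons_val_zero, Matrix.cons_val_one, Matrix.head_cons, Matrix.cons_val_two,
    Matrix.tail_cons, Matrix.cons_val_three]
  ring

lemma normTU_nonneg (p : Fin 4 → Fin 4 → ℝ) (ω s₁ s₂ : Fin 3 → ℝ) :
    0 ≤ normTU p ω s₁ s₂ := by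
  unfold normTU; positivity

lemma con2_le_normTU (p : Fin 4 → Fin 4 → ℝ) (ω s₁ s₂ : Fin 3 → ℝ) (i : Fin 3) (j : Fin 4) :
    |con2 p (Tfam ω s₁ s₂ i) (Ufam ω s₁ s₂ j)| ≤ normTU p ω s₁ s₂ := by
  unfold normTU
  calc |con2 p (Tfam ω s₁ s₂ i) (Ufam ω s₁ s₂ j)|
      ≤ ∑ j' : Fin 4, |con2 p (Tfam ω s₁ s₂ i) (Ufam ω s₁ s₂ j')| :=
        Finset.single_le_sum (f := fun j' => |con2 p (Tfam ω s₁ s₂ i) (Ufam ω s₁ s₂ j')|)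
          (fun _ _ => abs_nonneg _) (Finset.mem_univ j)
    _ ≤ ∑ i' : Fin 3, ∑ j' : Fin 4, |con2 p (Tfam ω s₁ s₂ i') (Ufam ω s₁ s₂ j')| :=
        Finset.single_le_sum
          (f := fun i' => ∑ j' : Fin 4, |con2 p (Tfam ω s₁ s₂ i') (Ufam ω s₁ s₂ j')|)
          (fun _ _ => Finset.sum_nonneg fun _ _ => abs_nonneg _) (Finset.mem_univ i)

lemma con2_symm {p : Fin 4 → Fin 4 → ℝ} (hp : ∀ α β, p α β = p β α) (U V : Fin 4 → ℝ) :
    con2 p U V = con2 p V U := by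
  rw [con2, con2, Finset.sum_comm]
  exact Finset.sum_congr rfl fun x _ => Finset.sum_congr rfl fun y _ => by rw [hp y x]; ring

lemma tnorm_nonneg (p : Fin 4 → Fin 4 → ℝ) : 0 ≤ tnorm p := Real.sqrt_nonneg _

lemma entry_le_tnorm (p : Fin 4 → Fin 4 → ℝ) (α β : Fin 4) : |p α β| ≤ tnorm p := by
  have h1 : p α β ^ 2 ≤ ∑ a : Fin 4, ∑ b : Fin 4, (p a b) ^ 2 := by
    calc p α β ^ 2 ≤ ∑ b : Fin 4, (p α b) ^ 2 :=
          Finset.single_le_sum (f := fun b => (p α b) ^ 2)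
            (fun _ _ => sq_nonneg _) (Finset.mem_univ β)
      _ ≤ ∑ a : Fin 4, ∑ b : Fin 4, (p a b) ^ 2 :=
          Finset.single_le_sum (f := fun a => ∑ b : Fin 4, (p a b) ^ 2)
            (fun _ _ => Finset.sum_nonneg fun _ _ => sq_nonneg _) (Finset.mem_univ α)
  calc |p α β| = Real.sqrt (p α β ^ 2) := (Real.sqrt_sq_eq_abs _).symm
    _ ≤ tnorm p := Real.sqrt_le_sqrt h1

lemma con2_le_tnorm {V W : Fin 4 → ℝ} (p : Fin 4 → Fin 4 → ℝ)
    (hV : ∀ α, |V α| ≤ 1) (hW : ∀ α, |W α| ≤ 1) :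
    |con2 p V W| ≤ 16 * tnorm p := by
  have key : ∀ α β : Fin 4, |p α β * V α * W β| ≤ tnorm p := by
    intro α β
    have h1 := entry_le_tnorm p α β
    have h2 := hV α
    have h3 := hW β
    have h4 : |p α β * V α * W β| = |p α β| * |V α| * |W β| := by
      rw [abs_mul, abs_mul]
    rw [h4]
    have h5 : |p α β| * |V α| ≤ tnorm p * 1 :=
      mul_le_mul h1 h2 (abs_nonneg _) (tnorm_nonneg p)
    have h6 : |p α β| * |V α| * |W β| ≤ tnorm p * 1 * 1 :=
      mul_le_mul h5 h3 (abs_nonneg _) (mul_nonneg (tnorm_nonneg p) zero_le_one)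
    linarith
  calc |con2 p V W| ≤ ∑ α : Fin 4, |∑ β : Fin 4, p α β * V α * W β| :=
        Finset.abs_sum_le_sum_abs _ _
    _ ≤ ∑ α : Fin 4, ∑ β : Fin 4, |p α β * V α * W β| :=
        Finset.sum_le_sum fun α _ => Finset.abs_sum_le_sum_abs _ _
    _ ≤ ∑ _α : Fin 4, ∑ _β : Fin 4, tnorm p :=
        Finset.sum_le_sum fun α _ => Finset.sum_le_sum fun β _ => key α β
    _ = 16 * tnorm p := by simp [Finset.sum_const]; ring

lemma omega_bd {ω s₁ s₂ : Fin 3 → ℝ} (h : IsFrame ω s₁ s₂) (i : Fin 3) : |ω i| ≤ 1 := by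
  have : ω i * ω i ≤ 1 := by
    calc ω i * ω i ≤ ∑ j : Fin 3, ω j * ω j :=
          Finset.single_le_sum (f := fun j => ω j * ω j)
            (fun _ _ => mul_self_nonneg _) (Finset.mem_univ i)
      _ = 1 := h.1
  exact abs_le_one_iff_mul_self_le_one.mpr this

lemma vecLb_bd {ω s₁ s₂ : Fin 3 → ℝ} (h : IsFrame ω s₁ s₂) (α : Fin 4) : |vecLb ω α| ≤ 1 := by
  fin_cases α <;> simp [vecLb] <;> exact omega_bd h _


set_option maxHeartbeats 2000000 in
/-- Lemma 5.2, eq. (5.10): estimate for the quadratic form `P`. -/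
theorem P_estimate :
    ∃ C : ℝ, 0 < C ∧
      ∀ (p k : Fin 4 → Fin 4 → ℝ),
        (∀ α β, p α β = p β α) → (∀ α β, k α β = k β α) →
        ∀ (x : Fin 3 → ℝ), x ≠ 0 →
        ∀ (ω : Fin 3 → ℝ), ω = (fun i => x i / Real.sqrt (∑ j : Fin 3, x j ^ 2)) →
        ∀ (s₁ s₂ : Fin 3 → ℝ), IsFrame ω s₁ s₂ →
          |Pform p k| ≤ C * (normTU p ω s₁ s₂ * normTU k ω s₁ s₂
            + |con2 p (vecL ω) (vecL ω)| * tnorm k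
            + tnorm p * |con2 k (vecL ω) (vecL ω)|) := by
  refine ⟨100, by norm_num, ?_⟩
  intro p k hp hk x hx ω hω s₁ s₂ hfr
  have bpLL : |con2 p (vecL ω) (vecL ω)| ≤ normTU p ω s₁ s₂ := by
    simpa [Tfam, Ufam] using con2_le_normTU p ω s₁ s₂ 0 0
  have bpLLb : |con2 p (vecL ω) (vecLb ω)| ≤ normTU p ω s₁ s₂ := by
    simpa [Tfam, Ufam] using con2_le_normTU p ω s₁ s₂ 0 1
  have bpLS1 : |con2 p (vecL ω) (spat s₁)| ≤ normTU p ω s₁ s₂ := by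
    simpa [Tfam, Ufam] using con2_le_normTU p ω s₁ s₂ 0 2
  have bpLS2 : |con2 p (vecL ω) (spat s₂)| ≤ normTU p ω s₁ s₂ := by
    simpa [Tfam, Ufam] using con2_le_normTU p ω s₁ s₂ 0 3
  have bpS1L : |con2 p (spat s₁) (vecL ω)| ≤ normTU p ω s₁ s₂ := by
    simpa [Tfam, Ufam] using con2_le_normTU p ω s₁ s₂ 1 0
  have bpS1Lb : |con2 p (spat s₁) (vecLb ω)| ≤ normTU p ω s₁ s₂ := by
    simpa [Tfam, Ufam] using con2_le_normTU p ω s₁ s₂ 1 1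
  have bpS1S1 : |con2 p (spat s₁) (spat s₁)| ≤ normTU p ω s₁ s₂ := by
    simpa [Tfam, Ufam] using con2_le_normTU p ω s₁ s₂ 1 2
  have bpS1S2 : |con2 p (spat s₁) (spat s₂)| ≤ normTU p ω s₁ s₂ := by
    simpa [Tfam, Ufam] using con2_le_normTU p ω s₁ s₂ 1 3
  have bpS2L : |con2 p (spat s₂) (vecL ω)| ≤ normTU p ω s₁ s₂ := by
    simpa [Tfam, Ufam] using con2_le_normTU p ω s₁ s₂ 2 0
  have bpS2Lb : |con2 p (spat s₂) (vecLb ω)| ≤ normTU p ω s₁ s₂ := by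
    simpa [Tfam, Ufam] using con2_le_normTU p ω s₁ s₂ 2 1
  have bpS2S1 : |con2 p (spat s₂) (spat s₁)| ≤ normTU p ω s₁ s₂ := by
    simpa [Tfam, Ufam] using con2_le_normTU p ω s₁ s₂ 2 2
  have bpS2S2 : |con2 p (spat s₂) (spat s₂)| ≤ normTU p ω s₁ s₂ := by
    simpa [Tfam, Ufam] using con2_le_normTU p ω s₁ s₂ 2 3
  have bbp : |con2 p (vecLb ω) (vecLb ω)| ≤ 16 * tnorm p :=
    con2_le_tnorm p (vecLb_bd hfr) (vecLb_bd hfr)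
  have bkLL : |con2 k (vecL ω) (vecL ω)| ≤ normTU k ω s₁ s₂ := by
    simpa [Tfam, Ufam] using con2_le_normTU k ω s₁ s₂ 0 0
  have bkLLb : |con2 k (vecL ω) (vecLb ω)| ≤ normTU k ω s₁ s₂ := by
    simpa [Tfam, Ufam] using con2_le_normTU k ω s₁ s₂ 0 1
  have bkLS1 : |con2 k (vecL ω) (spat s₁)| ≤ normTU k ω s₁ s₂ := by
    simpa [Tfam, Ufam] using con2_le_normTU k ω s₁ s₂ 0 2
  have bkLS2 : |con2 k (vecL ω) (spat s₂)| ≤ normTU k ω s₁ s₂ := by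
    simpa [Tfam, Ufam] using con2_le_normTU k ω s₁ s₂ 0 3
  have bkS1L : |con2 k (spat s₁) (vecL ω)| ≤ normTU k ω s₁ s₂ := by
    simpa [Tfam, Ufam] using con2_le_normTU k ω s₁ s₂ 1 0
  have bkS1Lb : |con2 k (spat s₁) (vecLb ω)| ≤ normTU k ω s₁ s₂ := by
    simpa [Tfam, Ufam] using con2_le_normTU k ω s₁ s₂ 1 1
  have bkS1S1 : |con2 k (spat s₁) (spat s₁)| ≤ normTU k ω s₁ s₂ := by
    simpa [Tfam, Ufam] using con2_le_normTU k ω s₁ s₂ 1 2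
  have bkS1S2 : |con2 k (spat s₁) (spat s₂)| ≤ normTU k ω s₁ s₂ := by
    simpa [Tfam, Ufam] using con2_le_normTU k ω s₁ s₂ 1 3
  have bkS2L : |con2 k (spat s₂) (vecL ω)| ≤ normTU k ω s₁ s₂ := by
    simpa [Tfam, Ufam] using con2_le_normTU k ω s₁ s₂ 2 0
  have bkS2Lb : |con2 k (spat s₂) (vecLb ω)| ≤ normTU k ω s₁ s₂ := by
    simpa [Tfam, Ufam] using con2_le_normTU k ω s₁ s₂ 2 1
  have bkS2S1 : |con2 k (spat s₂) (spat s₁)| ≤ normTU k ω s₁ s₂ := by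
    simpa [Tfam, Ufam] using con2_le_normTU k ω s₁ s₂ 2 2
  have bkS2S2 : |con2 k (spat s₂) (spat s₂)| ≤ normTU k ω s₁ s₂ := by
    simpa [Tfam, Ufam] using con2_le_normTU k ω s₁ s₂ 2 3
  have bbk : |con2 k (vecLb ω) (vecLb ω)| ≤ 16 * tnorm k :=
    con2_le_tnorm k (vecLb_bd hfr) (vecLb_bd hfr)
  have sypL : con2 p (vecLb ω) (vecL ω) = con2 p (vecL ω) (vecLb ω) :=
    con2_symm hp _ _
  have sypS1 : con2 p (vecLb ω) (spat s₁) = con2 p (spat s₁) (vecLb ω) :=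
    con2_symm hp _ _
  have sypS2 : con2 p (vecLb ω) (spat s₂) = con2 p (spat s₂) (vecLb ω) :=
    con2_symm hp _ _
  have sykL : con2 k (vecLb ω) (vecL ω) = con2 k (vecL ω) (vecLb ω) :=
    con2_symm hk _ _
  have sykS1 : con2 k (vecLb ω) (spat s₁) = con2 k (spat s₁) (vecLb ω) :=
    con2_symm hk _ _
  have sykS2 : con2 k (vecLb ω) (spat s₂) = con2 k (spat s₂) (vecLb ω) :=
    con2_symm hk _ _
  rw [Pform_decomp hfr p k, sypL, sypS1, sypS2, sykL, sykS1, sykS2]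
  have trp : |(-(1/2) * con2 p (vecL ω) (vecLb ω) - (1/2) * con2 p (vecL ω) (vecLb ω) + con2 p (spat s₁) (spat s₁) + con2 p (spat s₂) (spat s₂))| ≤ 3 * normTU p ω s₁ s₂ := by
    rw [abs_le]
    constructor <;>
      [linarith [neg_abs_le (con2 p (vecL ω) (vecLb ω)), le_abs_self (con2 p (vecL ω) (vecLb ω)), bpLLb, bpS1S1, bpS2S2, neg_abs_le (con2 p (spat s₁) (spat s₁)), le_abs_self (con2 p (spat s₁) (spat s₁)), neg_abs_le (con2 p (spat s₂) (spat s₂)), le_abs_self (con2 p (spat s₂) (spat s₂))];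
       linarith [neg_abs_le (con2 p (vecL ω) (vecLb ω)), le_abs_self (con2 p (vecL ω) (vecLb ω)), bpLLb, bpS1S1, bpS2S2, neg_abs_le (con2 p (spat s₁) (spat s₁)), le_abs_self (con2 p (spat s₁) (spat s₁)), neg_abs_le (con2 p (spat s₂) (spat s₂)), le_abs_self (con2 p (spat s₂) (spat s₂))]]
  have trk : |(-(1/2) * con2 k (vecL ω) (vecLb ω) - (1/2) * con2 k (vecL ω) (vecLb ω) + con2 k (spat s₁) (spat s₁) + con2 k (spat s₂) (spat s₂))| ≤ 3 * normTU k ω s₁ s₂ := by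
    rw [abs_le]
    constructor <;>
      [linarith [neg_abs_le (con2 k (vecL ω) (vecLb ω)), le_abs_self (con2 k (vecL ω) (vecLb ω)), bkLLb, bkS1S1, bkS2S2, neg_abs_le (con2 k (spat s₁) (spat s₁)), le_abs_self (con2 k (spat s₁) (spat s₁)), neg_abs_le (con2 k (spat s₂) (spat s₂)), le_abs_self (con2 k (spat s₂) (spat s₂))];
       linarith [neg_abs_le (con2 k (vecL ω) (vecLb ω)), le_abs_self (con2 k (vecL ω) (vecLb ω)), bkLLb, bkS1S1, bkS2S2, neg_abs_le (con2 k (spat s₁) (spat s₁)), le_abs_self (con2 k (spat s₁) (spat s₁)), neg_abs_le (con2 k (spat s₂) (spat s₂)), le_abs_self (con2 k (spat s₂) (spat s₂))]]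
  have hX : |(-(1/2) * con2 p (vecL ω) (vecLb ω) - (1/2) * con2 p (vecL ω) (vecLb ω) + con2 p (spat s₁) (spat s₁) + con2 p (spat s₂) (spat s₂)) * (-(1/2) * con2 k (vecL ω) (vecLb ω) - (1/2) * con2 k (vecL ω) (vecLb ω) + con2 k (spat s₁) (spat s₁) + con2 k (spat s₂) (spat s₂))| ≤ (3 * normTU p ω s₁ s₂) * (3 * normTU k ω s₁ s₂) := by
    rw [abs_mul]
    exact mul_le_mul trp trk (abs_nonneg _) (by have := normTU_nonneg p ω s₁ s₂; linarith)
  have m1 : |con2 p (vecL ω) (vecL ω) * con2 k (vecLb ω) (vecLb ω)| ≤ |con2 p (vecL ω) (vecL ω)| * (16 * tnorm k) := by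
    rw [abs_mul]
    exact mul_le_mul_of_nonneg_left bbk (abs_nonneg _)
  have m2 : |con2 p (vecLb ω) (vecLb ω) * con2 k (vecL ω) (vecL ω)| ≤ (16 * tnorm p) * |con2 k (vecL ω) (vecL ω)| := by
    rw [abs_mul]
    exact mul_le_mul_of_nonneg_right bbp (abs_nonneg _)
  have m3 : |con2 p (vecL ω) (vecLb ω) * con2 k (vecL ω) (vecLb ω)| ≤ normTU p ω s₁ s₂ * normTU k ω s₁ s₂ := by
    rw [abs_mul]
    exact mul_le_mul bpLLb bkLLb (abs_nonneg _) (normTU_nonneg p ω s₁ s₂)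
  have m4 : |con2 p (vecL ω) (spat s₁) * con2 k (spat s₁) (vecLb ω)| ≤ normTU p ω s₁ s₂ * normTU k ω s₁ s₂ := by
    rw [abs_mul]
    exact mul_le_mul bpLS1 bkS1Lb (abs_nonneg _) (normTU_nonneg p ω s₁ s₂)
  have m5 : |con2 p (vecL ω) (spat s₂) * con2 k (spat s₂) (vecLb ω)| ≤ normTU p ω s₁ s₂ * normTU k ω s₁ s₂ := by
    rw [abs_mul]
    exact mul_le_mul bpLS2 bkS2Lb (abs_nonneg _) (normTU_nonneg p ω s₁ s₂)
  have m6 : |con2 p (spat s₁) (vecLb ω) * con2 k (vecL ω) (spat s₁)| ≤ normTU p ω s₁ s₂ * normTU k ω s₁ s₂ := by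
    rw [abs_mul]
    exact mul_le_mul bpS1Lb bkLS1 (abs_nonneg _) (normTU_nonneg p ω s₁ s₂)
  have m7 : |con2 p (spat s₂) (vecLb ω) * con2 k (vecL ω) (spat s₂)| ≤ normTU p ω s₁ s₂ * normTU k ω s₁ s₂ := by
    rw [abs_mul]
    exact mul_le_mul bpS2Lb bkLS2 (abs_nonneg _) (normTU_nonneg p ω s₁ s₂)
  have m8 : |con2 p (spat s₁) (vecL ω) * con2 k (spat s₁) (vecLb ω)| ≤ normTU p ω s₁ s₂ * normTU k ω s₁ s₂ := by
    rw [abs_mul]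
    exact mul_le_mul bpS1L bkS1Lb (abs_nonneg _) (normTU_nonneg p ω s₁ s₂)
  have m9 : |con2 p (spat s₁) (vecLb ω) * con2 k (spat s₁) (vecL ω)| ≤ normTU p ω s₁ s₂ * normTU k ω s₁ s₂ := by
    rw [abs_mul]
    exact mul_le_mul bpS1Lb bkS1L (abs_nonneg _) (normTU_nonneg p ω s₁ s₂)
  have m10 : |con2 p (spat s₁) (spat s₁) * con2 k (spat s₁) (spat s₁)| ≤ normTU p ω s₁ s₂ * normTU k ω s₁ s₂ := by
    rw [abs_mul]
    exact mul_le_mul bpS1S1 bkS1S1 (abs_nonneg _) (normTU_nonneg p ω s₁ s₂)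
  have m11 : |con2 p (spat s₁) (spat s₂) * con2 k (spat s₁) (spat s₂)| ≤ normTU p ω s₁ s₂ * normTU k ω s₁ s₂ := by
    rw [abs_mul]
    exact mul_le_mul bpS1S2 bkS1S2 (abs_nonneg _) (normTU_nonneg p ω s₁ s₂)
  have m12 : |con2 p (spat s₂) (vecL ω) * con2 k (spat s₂) (vecLb ω)| ≤ normTU p ω s₁ s₂ * normTU k ω s₁ s₂ := by
    rw [abs_mul]
    exact mul_le_mul bpS2L bkS2Lb (abs_nonneg _) (normTU_nonneg p ω s₁ s₂)
  have m13 : |con2 p (spat s₂) (vecLb ω) * con2 k (spat s₂) (vecL ω)| ≤ normTU p ω s₁ s₂ * normTU k ω s₁ s₂ := by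
    rw [abs_mul]
    exact mul_le_mul bpS2Lb bkS2L (abs_nonneg _) (normTU_nonneg p ω s₁ s₂)
  have m14 : |con2 p (spat s₂) (spat s₁) * con2 k (spat s₂) (spat s₁)| ≤ normTU p ω s₁ s₂ * normTU k ω s₁ s₂ := by
    rw [abs_mul]
    exact mul_le_mul bpS2S1 bkS2S1 (abs_nonneg _) (normTU_nonneg p ω s₁ s₂)
  have m15 : |con2 p (spat s₂) (spat s₂) * con2 k (spat s₂) (spat s₂)| ≤ normTU p ω s₁ s₂ * normTU k ω s₁ s₂ := by
    rw [abs_mul]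
    exact mul_le_mul bpS2S2 bkS2S2 (abs_nonneg _) (normTU_nonneg p ω s₁ s₂)
  rw [abs_le]
  constructor <;>
    [linarith [hX,
      le_abs_self ((-(1/2) * con2 p (vecL ω) (vecLb ω) - (1/2) * con2 p (vecL ω) (vecLb ω) + con2 p (spat s₁) (spat s₁) + con2 p (spat s₂) (spat s₂)) * (-(1/2) * con2 k (vecL ω) (vecLb ω) - (1/2) * con2 k (vecL ω) (vecLb ω) + con2 k (spat s₁) (spat s₁) + con2 k (spat s₂) (spat s₂))),
      neg_abs_le ((-(1/2) * con2 p (vecL ω) (vecLb ω) - (1/2) * con2 p (vecL ω) (vecLb ω) + con2 p (spat s₁) (spat s₁) + con2 p (spat s₂) (spat s₂)) * (-(1/2) * con2 k (vecL ω) (vecLb ω) - (1/2) * con2 k (vecL ω) (vecLb ω) + con2 k (spat s₁) (spat s₁) + con2 k (spat s₂) (spat s₂))),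
      m1,
      le_abs_self (con2 p (vecL ω) (vecL ω) * con2 k (vecLb ω) (vecLb ω)),
      neg_abs_le (con2 p (vecL ω) (vecL ω) * con2 k (vecLb ω) (vecLb ω)),
      m2,
      le_abs_self (con2 p (vecLb ω) (vecLb ω) * con2 k (vecL ω) (vecL ω)),
      neg_abs_le (con2 p (vecLb ω) (vecLb ω) * con2 k (vecL ω) (vecL ω)),
      m3,
      le_abs_self (con2 p (vecL ω) (vecLb ω) * con2 k (vecL ω) (vecLb ω)),
      neg_abs_le (con2 p (vecL ω) (vecLb ω) * con2 k (vecL ω) (vecLb ω)),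
      m4,
      le_abs_self (con2 p (vecL ω) (spat s₁) * con2 k (spat s₁) (vecLb ω)),
      neg_abs_le (con2 p (vecL ω) (spat s₁) * con2 k (spat s₁) (vecLb ω)),
      m5,
      le_abs_self (con2 p (vecL ω) (spat s₂) * con2 k (spat s₂) (vecLb ω)),
      neg_abs_le (con2 p (vecL ω) (spat s₂) * con2 k (spat s₂) (vecLb ω)),
      m6,
      le_abs_self (con2 p (spat s₁) (vecLb ω) * con2 k (vecL ω) (spat s₁)),
      neg_abs_le (con2 p (spat s₁) (vecLb ω) * con2 k (vecL ω) (spat s₁)),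
      m7,
      le_abs_self (con2 p (spat s₂) (vecLb ω) * con2 k (vecL ω) (spat s₂)),
      neg_abs_le (con2 p (spat s₂) (vecLb ω) * con2 k (vecL ω) (spat s₂)),
      m8,
      le_abs_self (con2 p (spat s₁) (vecL ω) * con2 k (spat s₁) (vecLb ω)),
      neg_abs_le (con2 p (spat s₁) (vecL ω) * con2 k (spat s₁) (vecLb ω)),
      m9,
      le_abs_self (con2 p (spat s₁) (vecLb ω) * con2 k (spat s₁) (vecL ω)),
      neg_abs_le (con2 p (spat s₁) (vecLb ω) * con2 k (spat s₁) (vecL ω)),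
      m10,
      le_abs_self (con2 p (spat s₁) (spat s₁) * con2 k (spat s₁) (spat s₁)),
      neg_abs_le (con2 p (spat s₁) (spat s₁) * con2 k (spat s₁) (spat s₁)),
      m11,
      le_abs_self (con2 p (spat s₁) (spat s₂) * con2 k (spat s₁) (spat s₂)),
      neg_abs_le (con2 p (spat s₁) (spat s₂) * con2 k (spat s₁) (spat s₂)),
      m12,
      le_abs_self (con2 p (spat s₂) (vecL ω) * con2 k (spat s₂) (vecLb ω)),
      neg_abs_le (con2 p (spat s₂) (vecL ω) * con2 k (spat s₂) (vecLb ω)),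
      m13,
      le_abs_self (con2 p (spat s₂) (vecLb ω) * con2 k (spat s₂) (vecL ω)),
      neg_abs_le (con2 p (spat s₂) (vecLb ω) * con2 k (spat s₂) (vecL ω)),
      m14,
      le_abs_self (con2 p (spat s₂) (spat s₁) * con2 k (spat s₂) (spat s₁)),
      neg_abs_le (con2 p (spat s₂) (spat s₁) * con2 k (spat s₂) (spat s₁)),
      m15,
      le_abs_self (con2 p (spat s₂) (spat s₂) * con2 k (spat s₂) (spat s₂)),
      neg_abs_le (con2 p (spat s₂) (spat s₂) * con2 k (spat s₂) (spat s₂)),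
      mul_nonneg (normTU_nonneg p ω s₁ s₂) (normTU_nonneg k ω s₁ s₂),
      mul_nonneg (abs_nonneg (con2 p (vecL ω) (vecL ω))) (tnorm_nonneg k),
      mul_nonneg (tnorm_nonneg p) (abs_nonneg (con2 k (vecL ω) (vecL ω)))];
     linarith [hX,
      le_abs_self ((-(1/2) * con2 p (vecL ω) (vecLb ω) - (1/2) * con2 p (vecL ω) (vecLb ω) + con2 p (spat s₁) (spat s₁) + con2 p (spat s₂) (spat s₂)) * (-(1/2) * con2 k (vecL ω) (vecLb ω) - (1/2) * con2 k (vecL ω) (vecLb ω) + con2 k (spat s₁) (spat s₁) + con2 k (spat s₂) (spat s₂))),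
      neg_abs_le ((-(1/2) * con2 p (vecL ω) (vecLb ω) - (1/2) * con2 p (vecL ω) (vecLb ω) + con2 p (spat s₁) (spat s₁) + con2 p (spat s₂) (spat s₂)) * (-(1/2) * con2 k (vecL ω) (vecLb ω) - (1/2) * con2 k (vecL ω) (vecLb ω) + con2 k (spat s₁) (spat s₁) + con2 k (spat s₂) (spat s₂))),
      m1,
      le_abs_self (con2 p (vecL ω) (vecL ω) * con2 k (vecLb ω) (vecLb ω)),
      neg_abs_le (con2 p (vecL ω) (vecL ω) * con2 k (vecLb ω) (vecLb ω)),
      m2,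
      le_abs_self (con2 p (vecLb ω) (vecLb ω) * con2 k (vecL ω) (vecL ω)),
      neg_abs_le (con2 p (vecLb ω) (vecLb ω) * con2 k (vecL ω) (vecL ω)),
      m3,
      le_abs_self (con2 p (vecL ω) (vecLb ω) * con2 k (vecL ω) (vecLb ω)),
      neg_abs_le (con2 p (vecL ω) (vecLb ω) * con2 k (vecL ω) (vecLb ω)),
      m4,
      le_abs_self (con2 p (vecL ω) (spat s₁) * con2 k (spat s₁) (vecLb ω)),
      neg_abs_le (con2 p (vecL ω) (spat s₁) * con2 k (spat s₁) (vecLb ω)),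
      m5,
      le_abs_self (con2 p (vecL ω) (spat s₂) * con2 k (spat s₂) (vecLb ω)),
      neg_abs_le (con2 p (vecL ω) (spat s₂) * con2 k (spat s₂) (vecLb ω)),
      m6,
      le_abs_self (con2 p (spat s₁) (vecLb ω) * con2 k (vecL ω) (spat s₁)),
      neg_abs_le (con2 p (spat s₁) (vecLb ω) * con2 k (vecL ω) (spat s₁)),
      m7,
      le_abs_self (con2 p (spat s₂) (vecLb ω) * con2 k (vecL ω) (spat s₂)),
      neg_abs_le (con2 p (spat s₂) (vecLb ω) * con2 k (vecL ω) (spat s₂)),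
      m8,
      le_abs_self (con2 p (spat s₁) (vecL ω) * con2 k (spat s₁) (vecLb ω)),
      neg_abs_le (con2 p (spat s₁) (vecL ω) * con2 k (spat s₁) (vecLb ω)),
      m9,
      le_abs_self (con2 p (spat s₁) (vecLb ω) * con2 k (spat s₁) (vecL ω)),
      neg_abs_le (con2 p (spat s₁) (vecLb ω) * con2 k (spat s₁) (vecL ω)),
      m10,
      le_abs_self (con2 p (spat s₁) (spat s₁) * con2 k (spat s₁) (spat s₁)),
      neg_abs_le (con2 p (spat s₁) (spat s₁) * con2 k (spat s₁) (spat s₁)),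
      m11,
      le_abs_self (con2 p (spat s₁) (spat s₂) * con2 k (spat s₁) (spat s₂)),
      neg_abs_le (con2 p (spat s₁) (spat s₂) * con2 k (spat s₁) (spat s₂)),
      m12,
      le_abs_self (con2 p (spat s₂) (vecL ω) * con2 k (spat s₂) (vecLb ω)),
      neg_abs_le (con2 p (spat s₂) (vecL ω) * con2 k (spat s₂) (vecLb ω)),
      m13,
      le_abs_self (con2 p (spat s₂) (vecLb ω) * con2 k (spat s₂) (vecL ω)),
      neg_abs_le (con2 p (spat s₂) (vecLb ω) * con2 k (spat s₂) (vecL ω)),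
      m14,
      le_abs_self (con2 p (spat s₂) (spat s₁) * con2 k (spat s₂) (spat s₁)),
      neg_abs_le (con2 p (spat s₂) (spat s₁) * con2 k (spat s₂) (spat s₁)),
      m15,
      le_abs_self (con2 p (spat s₂) (spat s₂) * con2 k (spat s₂) (spat s₂)),
      neg_abs_le (con2 p (spat s₂) (spat s₂) * con2 k (spat s₂) (spat s₂)),
      mul_nonneg (normTU_nonneg p ω s₁ s₂) (normTU_nonneg k ω s₁ s₂),
      mul_nonneg (abs_nonneg (con2 p (vecL ω) (vecL ω))) (tnorm_nonneg k),
      mul_nonneg (tnorm_nonneg p) (abs_nonneg (con2 k (vecL ω) (vecL ω)))]]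

end LindbladRodnianski
end
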